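/- arXiv:1003.5788 — 2 statements merged into one kernel-verified Lean document; each statement's English description precedes it below -/
import Mathlib

section
/- The Moyal product on Schwartz functions is associative: for all f, g, h ∈ 𝒮(ℝ^D, ℂ), (f ⋆ g) ⋆ h = f ⋆ (g ⋆ h). -/
/-
For an invertible linear map `L` let `(f ⋆_L g)(x) = ∬ e(-⟪y, L z⟫) f(x + y) g(x + z) dy dz`,
`e(t) = exp(2πit)`. Doing the `y`-integral first is a Fourier transform:
`(f ⋆_L g)(x) = ∫ e(⟪x, L z⟫) f̂(L z) g(x + z) dz`; doing the `z`-integral first gives the same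
formula for `L†` with `f` and `g` exchanged. Expanded this way, `((f ⋆ g) ⋆ h)(x)` and
`(f ⋆ (g ⋆ h))(x)` are the two iterated integrals of
`e(⟪x, L† y⟫ + ⟪x, L z⟫ + ⟪y, L z⟫) g(x + y + z) ĥ(L† y) f̂(L z)`, because `⟪z, L† y⟫ = ⟪y, L z⟫`;
this kernel is integrable since `f̂ ∘ L` and `ĥ ∘ L†` are, so Fubini concludes. The Moyal product
is `(πθ)^{-D}` times the twisted product for `L = π⁻¹ Θ⁻¹`, and `Θ` is invertible as `Σ² = -1`.
-/

open MeasureTheory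

noncomputable section

/-- The standard symplectic matrix `Σ` on `ℝ^D`: block-diagonal with `D/2` blocks
`((0, -1), (1, 0))`. -/
def stdSigma (D : ℕ) : Matrix (Fin D) (Fin D) ℝ := fun i j =>
  if i.val % 2 = 1 ∧ i.val = j.val + 1 then 1
  else if j.val % 2 = 1 ∧ j.val = i.val + 1 then -1 else 0

/-- `Θ = θ Σ`. -/
def Theta (θ : ℝ) (D : ℕ) : Matrix (Fin D) (Fin D) ℝ := θ • stdSigma D

/-- `y ∧ z = 2 yᵀ Θ⁻¹ z`. -/
def wedge (θ : ℝ) {D : ℕ} (y z : EuclideanSpace ℝ (Fin D)) : ℝ :=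
  2 * ∑ i, ∑ j, y i * (Theta θ D)⁻¹ i j * z j

/-- The Moyal product `(f ⋆ g)(x) = (πθ)^{-D} ∬ f(x+y) g(x+z) e^{-i y∧z} dy dz`. -/
def moyal (θ : ℝ) {D : ℕ} (f g : EuclideanSpace ℝ (Fin D) → ℂ) :
    EuclideanSpace ℝ (Fin D) → ℂ := fun x =>
  ((Real.pi * θ) ^ D)⁻¹ •
    ∫ p : EuclideanSpace ℝ (Fin D) × EuclideanSpace ℝ (Fin D),
      f (x + p.1) * g (x + p.2) * Complex.exp (-(Complex.I) * (wedge θ p.1 p.2 : ℂ))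

open scoped RealInnerProductSpace FourierTransform SchwartzMap InnerProduct

theorem ContinuousLinearMap.det_adjoint {V : Type*} [NormedAddCommGroup V]
    [InnerProductSpace ℝ V] [FiniteDimensional ℝ V] (L : V →L[ℝ] V) : (L†).det = L.det := by
  let b := (stdOrthonormalBasis ℝ V).toBasis
  rw [ContinuousLinearMap.det, ContinuousLinearMap.det, ← LinearMap.det_toMatrix b,
    ← LinearMap.det_toMatrix b, ← ContinuousLinearMap.adjoint_toLinearMap,
    LinearMap.toMatrix_adjoint, Matrix.det_conjTranspose, star_trivial]

theorem MeasureTheory.Integrable.circle_smul {α : Type*} [MeasurableSpace α] {μ : Measure α}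
    {c : α → Circle} (hc : AEStronglyMeasurable c μ) {f : α → ℂ} (hf : Integrable f μ) :
    Integrable (fun a ↦ c a • f a) μ :=
  hf.mono (hc.smul hf.1) (.of_forall fun a ↦ (Circle.norm_smul (c a) (f a)).le)

section TwistedProduct

variable {V : Type*} [NormedAddCommGroup V] [InnerProductSpace ℝ V] [FiniteDimensional ℝ V]
  [MeasurableSpace V] [BorelSpace V]

theorem MeasureTheory.Integrable.comp_continuousLinearMap_of_det_ne_zero {E : Type*}
    [NormedAddCommGroup E] {φ : V → E} (hφ : Integrable φ) {L : V →L[ℝ] V} (hL : L.det ≠ 0) :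
    Integrable (φ ∘ L) := by
  refine Integrable.comp_measurable ?_ L.continuous.measurable
  rw [← L.coe_coe, Measure.map_linearMap_addHaar_eq_smul_addHaar volume hL]
  exact hφ.smul_measure ENNReal.ofReal_ne_top

theorem Real.fourier_comp_add_left (f : V → ℂ) (x w : V) :
    𝓕 (fun y ↦ f (x + y)) w = 𝐞 ⟪x, w⟫ • 𝓕 f w := by
  simp_rw [add_comm x]
  exact congrFun (VectorFourier.fourierIntegral_comp_add_right 𝐞 volume (innerₗ V) f x) w

def twistedProduct (L : V →L[ℝ] V) (f g : V → ℂ) (x : V) : ℂ :=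
  ∫ p : V × V, 𝐞 (-⟪p.1, L p.2⟫) • (f (x + p.1) * g (x + p.2))

theorem twistedProduct_smul_left (L : V →L[ℝ] V) (c : ℂ) (f g : V → ℂ) :
    twistedProduct L (c • f) g = c • twistedProduct L f g := by
  ext x
  simp only [twistedProduct, Pi.smul_apply, smul_mul_assoc, smul_comm _ c, integral_smul]

theorem twistedProduct_smul_right (L : V →L[ℝ] V) (c : ℂ) (f g : V → ℂ) :
    twistedProduct L f (c • g) = c • twistedProduct L f g := by
  ext x
  simp only [twistedProduct, Pi.smul_apply, mul_smul_comm, smul_comm _ c, integral_smul]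

theorem twistedProduct_comm (L : V →L[ℝ] V) (f g : V → ℂ) :
    twistedProduct L f g = twistedProduct (L†) g f := by
  ext x
  rw [twistedProduct, twistedProduct, Measure.volume_eq_prod, ← integral_prod_swap]
  simp_rw [Prod.fst_swap, Prod.snd_swap, ContinuousLinearMap.adjoint_inner_right, real_inner_comm,
    mul_comm]

theorem twistedProduct_eq_integral_fourier_left (L : V →L[ℝ] V) {f g : V → ℂ}
    (hf : Integrable f) (hg : Integrable g) (x : V) :
    twistedProduct L f g x = ∫ z, 𝐞 ⟪x, L z⟫ • (𝓕 f (L z) * g (x + z)) := by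
  have hphase : Continuous fun p : V × V ↦ 𝐞 (-⟪p.1, L p.2⟫) := by fun_prop
  have hint := ((hf.comp_add_left x).mul_prod (hg.comp_add_left x)).circle_smul
    hphase.aestronglyMeasurable
  rw [twistedProduct, Measure.volume_eq_prod, integral_prod_symm _ hint]
  congr 1 with z
  simp_rw [← smul_mul_assoc, integral_mul_const, ← Real.fourier_comp_add_left, Real.fourier_eq]

theorem twistedProduct_eq_integral_fourier_right (L : V →L[ℝ] V) {f g : V → ℂ}
    (hf : Integrable f) (hg : Integrable g) (x : V) :
    twistedProduct L f g x = ∫ y, 𝐞 ⟪x, (L†) y⟫ • (𝓕 g ((L†) y) * f (x + y)) := by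
  rw [twistedProduct_comm]
  exact twistedProduct_eq_integral_fourier_left _ hg hf x

theorem integrable_twistedProduct (L : V →L[ℝ] V) {f g : V → ℂ} (hf : Integrable f)
    (hg : Integrable g) (hfL : Integrable (𝓕 f ∘ L)) :
    Integrable (twistedProduct L f g) := by
  have hF : Integrable (fun p : V × V ↦ 𝓕 f (L p.2) * g (p.1 + p.2)) (volume.prod volume) :=
    (measurePreserving_add_prod volume volume).integrable_comp_of_integrable
      (hfL.mul_prod hg).swap
  have hphase : Continuous fun p : V × V ↦ 𝐞 ⟪p.1, L p.2⟫ := by fun_prop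
  rw [funext (twistedProduct_eq_integral_fourier_left L hf hg)]
  exact (hF.circle_smul hphase.aestronglyMeasurable).integral_prod_left

theorem twistedProduct_assoc (L : V →L[ℝ] V) (hL : L.det ≠ 0) (f g h : 𝓢(V, ℂ)) :
    twistedProduct L (twistedProduct L f g) h = twistedProduct L f (twistedProduct L g h) := by
  ext x
  have hfL : Integrable (𝓕 (f : V → ℂ) ∘ L) :=
    (𝓕 f).integrable.comp_continuousLinearMap_of_det_ne_zero hL
  have hhL : Integrable (𝓕 (h : V → ℂ) ∘ (L†)) :=
    (𝓕 h).integrable.comp_continuousLinearMap_of_det_ne_zero (L.det_adjoint ▸ hL)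
  have hfg : Integrable (twistedProduct L f g) :=
    integrable_twistedProduct L f.integrable g.integrable hfL
  have hgh : Integrable (twistedProduct L g h) :=
    twistedProduct_comm L g h ▸ integrable_twistedProduct (L†) h.integrable g.integrable hhL
  let K : V → V → ℂ := fun y z ↦ 𝐞 (⟪x, (L†) y⟫ + ⟪x, L z⟫ + ⟪y, L z⟫) •
    (g (x + y + z) * (𝓕 (h : V → ℂ) ((L†) y) * 𝓕 (f : V → ℂ) (L z)))
  have hK : Integrable (Function.uncurry K) (volume.prod volume) := by
    have hphase : Continuous fun p : V × V ↦ 𝐞 (⟪x, (L†) p.1⟫ + ⟪x, L p.2⟫ + ⟪p.1, L p.2⟫) := by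
      fun_prop
    have hg : Continuous fun p : V × V ↦ g (x + p.1 + p.2) := by fun_prop
    exact ((hhL.mul_prod hfL).bdd_mul hg.aestronglyMeasurable
      (.of_forall fun _ ↦ g.norm_le_seminorm ℝ _)).circle_smul hphase.aestronglyMeasurable
  calc twistedProduct L (twistedProduct L f g) h x
      = ∫ y, ∫ z, K y z := by
        rw [twistedProduct_eq_integral_fourier_right L hfg h.integrable]
        congr 1 with y
        rw [twistedProduct_eq_integral_fourier_left L f.integrable g.integrable]
        simp only [K, Circle.smul_def, smul_eq_mul, ← integral_const_mul]
        congr 1 with z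
        simp only [AddChar.map_add_eq_mul, Circle.coe_mul, inner_add_left]
        ring
    _ = ∫ z, ∫ y, K y z := integral_integral_swap hK
    _ = twistedProduct L f (twistedProduct L g h) x := by
        rw [twistedProduct_eq_integral_fourier_left L f.integrable hgh]
        congr 1 with z
        rw [twistedProduct_eq_integral_fourier_right L g.integrable h.integrable]
        simp only [K, Circle.smul_def, smul_eq_mul, ← integral_const_mul]
        congr 1 with y
        have hskew : ⟪z, (L†) y⟫ = ⟪y, L z⟫ := by
          rw [ContinuousLinearMap.adjoint_inner_right, real_inner_comm]
        simp only [AddChar.map_add_eq_mul, Circle.coe_mul, inner_add_left, hskew,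
          add_right_comm x z]
        ring

end TwistedProduct

theorem stdSigma_mul_self {D : ℕ} (hD : Even D) : stdSigma D * stdSigma D = -1 := by
  obtain ⟨m, rfl⟩ := hD
  ext i k
  -- the only nonzero entry in row `i` sits in the column of the other index of `i`'s 2×2 block
  rw [Matrix.mul_apply, Finset.sum_eq_single
    ⟨if i.val % 2 = 0 then i.val + 1 else i.val - 1, by split_ifs <;> omega⟩]
  · simp only [stdSigma, Matrix.neg_apply, Matrix.one_apply, Fin.ext_iff]
    split_ifs <;> (try norm_num) <;> omega
  · intro j _ hj
    simp only [stdSigma, ne_eq, Fin.ext_iff] at hj ⊢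
    split_ifs at hj ⊢ <;> (try norm_num) <;> omega
  · simp

theorem isUnit_det_Theta {θ : ℝ} (hθ : θ ≠ 0) {D : ℕ} (hD : Even D) : IsUnit (Theta θ D).det :=
  Matrix.isUnit_det_of_right_inverse (B := (-θ⁻¹) • stdSigma D) <| by
    rw [Theta, Matrix.smul_mul, Matrix.mul_smul, stdSigma_mul_self hD, smul_smul, mul_neg,
      mul_inv_cancel₀ hθ, neg_one_smul, neg_neg]

def wedgeOperator (θ : ℝ) (D : ℕ) : EuclideanSpace ℝ (Fin D) →L[ℝ] EuclideanSpace ℝ (Fin D) :=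
  Matrix.toEuclideanCLM (𝕜 := ℝ) (Real.pi⁻¹ • (Theta θ D)⁻¹)

theorem wedge_eq_inner (θ : ℝ) {D : ℕ} (y z : EuclideanSpace ℝ (Fin D)) :
    wedge θ y z = 2 * Real.pi * ⟪y, wedgeOperator θ D z⟫ := by
  rw [wedge, wedgeOperator, Matrix.inner_toEuclideanCLM]
  simp only [dotProduct, Matrix.mulVec, Matrix.smul_apply, smul_eq_mul, Finset.mul_sum]
  field_simp

theorem det_wedgeOperator_ne_zero {θ : ℝ} (hθ : θ ≠ 0) {D : ℕ} (hD : Even D) :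
    (wedgeOperator θ D).det ≠ 0 := by
  rw [ContinuousLinearMap.det, wedgeOperator, Matrix.coe_toEuclideanCLM_eq_toEuclideanLin,
    Matrix.toEuclideanLin_eq_toLin_orthonormal, LinearMap.det_toLin, Matrix.det_smul]
  exact mul_ne_zero (by positivity)
    (Matrix.isUnit_nonsing_inv_det _ (isUnit_det_Theta hθ hD)).ne_zero

theorem moyal_eq_smul_twistedProduct (θ : ℝ) {D : ℕ} (f g : EuclideanSpace ℝ (Fin D) → ℂ) :
    moyal θ f g = (((Real.pi * θ) ^ D)⁻¹ : ℂ) • twistedProduct (wedgeOperator θ D) f g := by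
  ext x
  simp only [moyal, twistedProduct, Pi.smul_apply, Complex.real_smul, smul_eq_mul,
    Circle.smul_def, Real.fourierChar_apply, wedge_eq_inner]
  push_cast
  congr 2 with p
  ring_nf

theorem moyal_assoc_general (D : ℕ) (hDeven : Even D) (θ : ℝ) (hθ : 0 < θ)
    (f g h : SchwartzMap (EuclideanSpace ℝ (Fin D)) ℂ) :
    moyal θ (moyal θ (⇑f) (⇑g)) (⇑h) = moyal θ (⇑f) (moyal θ (⇑g) (⇑h)) := by
  simp only [moyal_eq_smul_twistedProduct, twistedProduct_smul_left, twistedProduct_smul_right,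
    twistedProduct_assoc _ (det_wedgeOperator_ne_zero hθ.ne' hDeven)]

/-- the Moyal product on Schwartz functions is associative. -/
theorem moyal_assoc (D : ℕ) (hD : 0 < D) (hDeven : Even D) (θ : ℝ) (hθ : 0 < θ)
    (f g h : SchwartzMap (EuclideanSpace ℝ (Fin D)) ℂ) :
    moyal θ (moyal θ (⇑f) (⇑g)) (⇑h) = moyal θ (⇑f) (moyal θ (⇑g) (⇑h)) :=
  moyal_assoc_general D hDeven θ hθ f g h
end
end

section
/- Let A be a D×D real matrix that is orthogonal (A Aᵀ = 1) and symplectic for Σ (Aᵀ Σ A = Σ). Then the block-diagonal matrix M = ((A, 0), (0, A)) belongs to Sp(ℝ^{2D}, ω) and commutes with Z_Ω, i.e. M Z_Ω M⁻¹ = Z_Ω for every real Ω; thus matrices in O(ℝ^D, 1) ∩ Sp(ℝ^D, Σ) leave Z_Ω invariant. -/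
open Matrix

noncomputable section

/-- The symplectic form `ω = ((0, Σ), (Σ, 0))` on the phase space `ℝ^{2D}`. -/
def omegaMat (D : ℕ) : Matrix (Fin D ⊕ Fin D) (Fin D ⊕ Fin D) ℝ :=
  Matrix.fromBlocks 0 (stdSigma D) (stdSigma D) 0

/-- `Z_Ω = ((0, (4Ω²/θ²)Σ), (Σ, 0))`. -/
def ZOmega (D : ℕ) (θ Ω : ℝ) : Matrix (Fin D ⊕ Fin D) (Fin D ⊕ Fin D) ℝ :=
  Matrix.fromBlocks 0 ((4 * Ω ^ 2 / θ ^ 2) • stdSigma D) (stdSigma D) 0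

theorem mul_mul_eq_of_mul_eq_one_of_mul_mul_eq {M : Type*} [Monoid M] {a b s : M}
    (hab : a * b = 1) (h : b * s * a = s) : a * s * b = s :=
  calc a * s * b = a * (b * s * a) * b := by rw [h]
    _ = (a * b) * s * (a * b) := by simp only [mul_assoc]
    _ = s := by rw [hab, one_mul, mul_one]

theorem Matrix.fromBlocks_diag_mul_antidiag_mul_diag {α l₁ l₂ m₁ m₂ n₁ n₂ o₁ o₂ : Type*}
    [Fintype m₁] [Fintype m₂] [Fintype n₁] [Fintype n₂] [Semiring α]
    (P₁ : Matrix l₁ m₁ α) (P₂ : Matrix l₂ m₂ α) (B : Matrix m₁ n₂ α) (C : Matrix m₂ n₁ α)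
    (Q₁ : Matrix n₁ o₁ α) (Q₂ : Matrix n₂ o₂ α) :
    fromBlocks P₁ 0 0 P₂ * fromBlocks 0 B C 0 * fromBlocks Q₁ 0 0 Q₂
      = fromBlocks 0 (P₁ * B * Q₂) (P₂ * C * Q₁) 0 := by
  simp only [fromBlocks_multiply, Matrix.mul_zero, Matrix.zero_mul, add_zero, zero_add]

theorem orthogonal_symplectic_leaves_ZOmega_invariant_general (D : ℕ)
    (θ : ℝ) (Ω : ℝ) (A : Matrix (Fin D) (Fin D) ℝ)
    (hO : A * Aᵀ = 1) (hSp : Aᵀ * stdSigma D * A = stdSigma D) :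
    (Matrix.fromBlocks A 0 0 A)ᵀ * omegaMat D * Matrix.fromBlocks A 0 0 A = omegaMat D ∧
    Matrix.fromBlocks A 0 0 A * ZOmega D θ Ω * (Matrix.fromBlocks A 0 0 A)⁻¹
      = ZOmega D θ Ω := by
  have hSpConj : A * stdSigma D * Aᵀ = stdSigma D := mul_mul_eq_of_mul_eq_one_of_mul_mul_eq hO hSp
  have hinv : (fromBlocks A 0 0 A)⁻¹ = fromBlocks Aᵀ 0 0 Aᵀ :=
    inv_eq_right_inv (by rw [fromBlocks_multiply]; simp [hO])
  refine ⟨?_, ?_⟩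
  · rw [fromBlocks_transpose, transpose_zero, omegaMat, fromBlocks_diag_mul_antidiag_mul_diag,
      hSp]
  · rw [hinv, ZOmega, fromBlocks_diag_mul_antidiag_mul_diag, Matrix.mul_smul, Matrix.smul_mul,
      hSpConj]

/-- if `A` is orthogonal and symplectic for `Σ`, then
`M = ((A, 0), (0, A))` is in `Sp(ℝ^{2D}, ω)` and leaves `Z_Ω` invariant. -/
theorem orthogonal_symplectic_leaves_ZOmega_invariant (D : ℕ) (hD : 0 < D) (hDeven : Even D)
    (θ : ℝ) (hθ : 0 < θ) (Ω : ℝ) (A : Matrix (Fin D) (Fin D) ℝ)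
    (hO : A * Aᵀ = 1) (hSp : Aᵀ * stdSigma D * A = stdSigma D) :
    (Matrix.fromBlocks A 0 0 A)ᵀ * omegaMat D * Matrix.fromBlocks A 0 0 A = omegaMat D ∧
    Matrix.fromBlocks A 0 0 A * ZOmega D θ Ω * (Matrix.fromBlocks A 0 0 A)⁻¹
      = ZOmega D θ Ω :=
  orthogonal_symplectic_leaves_ZOmega_invariant_general D θ Ω A hO hSp
end
end
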